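/- Let f : S → S be a partial function on a finite set S and let g : S → ℕ ∪ {∞} satisfy g(x) = 1 + g(f(x)) whenever f(x) is defined (with 1 + ∞ = ∞), and g(x) = 0 whenever f(x) is undefined. If iterating f starting from x eventually enters a cycle, then g(x) = ∞; otherwise, g(x) equals the (finite) number of iterations of f from x until f is undefined. -/

import Mathlib

/-- Iterated application at distance `l` of the partial function `F`. -/
def anc {V : Type*} (F : V → Option V) : ℕ → V → Option V
  | 0, v => some v
  | k+1, v => (anc F k v).bind F

lemma anc_add {V : Type*} (F : V → Option V) (a b : ℕ) (x : V) :
    anc F (a + b) x = (anc F a x).bind (anc F b) := by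
  induction b with
  | zero => simp [anc]
  | succ b ih =>
      show anc F ((a + b) + 1) x = _
      rw [anc, ih]
      cases h : anc F a x with
      | none => simp
      | some z => simp [anc]

lemma g_anc {S : Type*} (F : S → Option S) (g : S → ℕ∞)
    (hrec : ∀ x y : S, F x = some y → g x = 1 + g y)
    (t : ℕ) (x y : S) (h : anc F t x = some y) : g x = (t : ℕ∞) + g y := by
  induction t generalizing y with
  | zero =>
      simp [anc] at h; subst h; simp
  | succ t ih =>
      rw [anc] at h
      rcases Option.bind_eq_some_iff.mp h with ⟨z, hz, hFz⟩
      rw [ih z hz, hrec z y hFz]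
      push_cast
      ring

/-- let `F` be a partial function on a finite set and let
`g : S → ℕ∞` satisfy `g x = 1 + g (F x)` when `F x` is defined and `g x = 0`
otherwise. Then: if the orbit of `x` under `F` enters a cycle, `g x = ∞`;
otherwise `g x` equals the number of iterations from `x` until `F` is undefined;
and (by finiteness) exactly one of these two situations occurs. -/
theorem partial_function_recursion {S : Type*} [Finite S]
    (F : S → Option S) (g : S → ℕ∞)
    (hrec : ∀ x y : S, F x = some y → g x = 1 + g y)
    (hbase : ∀ x : S, F x = none → g x = 0)
    (x : S) :
    ((∃ l l', l < l' ∧ (anc F l x).isSome ∧ anc F l x = anc F l' x) → g x = ⊤) ∧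
    (∀ t y, anc F t x = some y → F y = none → g x = (t : ℕ∞)) ∧
    ((∃ l l', l < l' ∧ (anc F l x).isSome ∧ anc F l x = anc F l' x) ∨
      (∃ t y, anc F t x = some y ∧ F y = none)) := by
  refine ⟨?_, ?_, ?_⟩
  · rintro ⟨l, l', hll, hsome, heq⟩
    obtain ⟨y, hy⟩ := Option.isSome_iff_exists.mp hsome
    obtain ⟨d, rfl⟩ := Nat.exists_eq_add_of_lt hll
    have hcyc : anc F (d + 1) y = some y := by
      have h2 := anc_add F l (d + 1) x
      rw [show l + (d + 1) = l + d + 1 by ring, ← heq, hy] at h2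
      simpa using h2.symm
    have hgy : g y = (↑(d + 1) : ℕ∞) + g y := g_anc F g hrec _ y y hcyc
    have hgyT : g y = ⊤ := by
      by_contra hne
      lift g y to ℕ using hne with n hn
      have : (n : ℕ∞) = ((d + 1 + n : ℕ) : ℕ∞) := by push_cast; exact hgy
      have := Nat.cast_injective this
      omega
    have := g_anc F g hrec l x y hy
    rw [hgyT] at this
    simpa using this
  · intro t y hty hFy
    have := g_anc F g hrec t x y hty
    rw [hbase y hFy] at this
    simpa using this
  · by_cases hall : ∀ k, (anc F k x).isSome
    · left
      haveI := Fintype.ofFinite S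
      obtain ⟨a, b, hab, heq⟩ := Finite.exists_ne_map_eq_of_infinite (fun k => anc F k x)
      rcases lt_or_gt_of_ne hab with h | h
      · exact ⟨a, b, h, hall a, heq⟩
      · exact ⟨b, a, h, hall b, heq.symm⟩
    · right
      push_neg at hall
      obtain ⟨k, hk⟩ := hall
      have hk' : anc F k x = none := Option.not_isSome_iff_eq_none.mp hk
      have hex : ∃ k, anc F k x = none := ⟨k, hk'⟩
      classical
      have hm : anc F (Nat.find hex) x = none := Nat.find_spec hex
      have hm0 : Nat.find hex ≠ 0 := by
        intro h
        rw [h] at hm; simp [anc] at hm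
      obtain ⟨t, hteq⟩ : ∃ t, Nat.find hex = t + 1 := ⟨Nat.find hex - 1, by omega⟩
      rw [hteq] at hm
      have ht : anc F t x ≠ none := Nat.find_min hex (by omega)
      obtain ⟨y, hy⟩ := Option.ne_none_iff_exists'.mp ht
      refine ⟨t, y, hy, ?_⟩
      have : anc F (t + 1) x = (anc F t x).bind F := rfl
      rw [hy] at this
      rw [hm] at this
      simpa using this.symm
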